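/- Let 1 ≤ p ≤ q < ∞. For all sequences x, y with ‖x‖_{ℓ^p_q} < ∞ and ‖y‖_{ℓ^p_q} < ∞, the triangle inequality ‖x + y‖_{ℓ^p_q} ≤ ‖x‖_{ℓ^p_q} + ‖y‖_{ℓ^p_q} holds; together with absolute homogeneity ‖αx‖_{ℓ^p_q} = |α| ‖x‖_{ℓ^p_q} and the fact that ‖x‖_{ℓ^p_q} = 0 if and only if x = 0, this shows ‖·‖_{ℓ^p_q} is a norm on ℓ^p_q. -/

import Mathlib

open scoped ENNReal NNReal BigOperators

/-! Each quantity under the supremum is a fixed weight times the `ℓ^p` norm of `x` on a finite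
window, so Minkowski's inequality and homogeneity of that finite norm pass to the supremum, and
the one-point windows `S k 0` give `‖x k‖ ≤ ‖x‖_{ℓ^p_q}`, hence definiteness. -/

/-- The discrete "ball" `S_{m,N} = {m-N, …, m+N}` as a finite set of integers. -/
noncomputable def S (m : ℤ) (N : ℕ) : Finset ℤ := Finset.Icc (m - N) (m + N)

/-- The discrete Morrey norm `‖x‖_{ℓ^p_q}`. -/
noncomputable def morreyNorm (p q : ℝ) (x : ℤ → ℂ) : ℝ≥0∞ :=
  ⨆ (m : ℤ) (N : ℕ),
    (2 * (N : ℝ≥0∞) + 1) ^ (1 / q - 1 / p) *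
      (∑ k ∈ S m N, (‖x k‖₊ : ℝ≥0∞) ^ p) ^ (1 / p)

section LpNormOn

variable {ι E : Type*} [SeminormedAddCommGroup E]

noncomputable def lpNormOn (p : ℝ) (s : Finset ι) (x : ι → E) : ℝ≥0∞ :=
  (∑ k ∈ s, (‖x k‖₊ : ℝ≥0∞) ^ p) ^ (1 / p)

theorem lpNormOn_add_le {p : ℝ} (hp : 1 ≤ p) (s : Finset ι) (x y : ι → E) :
    lpNormOn p s (x + y) ≤ lpNormOn p s x + lpNormOn p s y := by
  have hp0 : 0 ≤ p := zero_le_one.trans hp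
  refine le_trans ?_ (ENNReal.Lp_add_le _ _ _ hp)
  refine ENNReal.rpow_le_rpow (Finset.sum_le_sum fun k _ => ?_) (by positivity)
  exact ENNReal.rpow_le_rpow (by exact_mod_cast nnnorm_add_le (x k) (y k)) hp0

theorem lpNormOn_smul {𝕜 : Type*} [NormedField 𝕜] [NormedSpace 𝕜 E] {p : ℝ} (hp : 0 < p)
    (s : Finset ι) (α : 𝕜) (x : ι → E) :
    lpNormOn p s (α • x) = ‖α‖₊ * lpNormOn p s x := by
  have hterm : ∀ k, (‖(α • x) k‖₊ : ℝ≥0∞) ^ p = (‖α‖₊ : ℝ≥0∞) ^ p * (‖x k‖₊ : ℝ≥0∞) ^ p :=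
    fun k => by
      rw [Pi.smul_apply, nnnorm_smul, ENNReal.coe_mul, ENNReal.mul_rpow_of_nonneg _ _ hp.le]
  rw [lpNormOn, lpNormOn, Finset.sum_congr rfl fun k _ => hterm k, ← Finset.mul_sum,
    ENNReal.mul_rpow_of_nonneg _ _ (by positivity), ← ENNReal.rpow_mul, mul_one_div,
    div_self hp.ne', ENNReal.rpow_one]

theorem lpNormOn_singleton {p : ℝ} (hp : p ≠ 0) (k : ι) (x : ι → E) :
    lpNormOn p {k} x = ‖x k‖₊ := by
  rw [lpNormOn, Finset.sum_singleton, ← ENNReal.rpow_mul, mul_one_div, div_self hp,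
    ENNReal.rpow_one]

theorem lpNormOn_zero {p : ℝ} (hp : 0 < p) (s : Finset ι) : lpNormOn p s (0 : ι → E) = 0 := by
  simp [lpNormOn, ENNReal.zero_rpow_of_pos hp, hp]

end LpNormOn

section MorreyNorm

variable {p q : ℝ}

theorem morreyNorm_eq_iSup_lpNormOn (x : ℤ → ℂ) :
    morreyNorm p q x = ⨆ (m : ℤ) (N : ℕ), (2 * (N : ℝ≥0∞) + 1) ^ (1 / q - 1 / p) *
      lpNormOn p (S m N) x :=
  rfl

theorem le_morreyNorm (x : ℤ → ℂ) (m : ℤ) (N : ℕ) :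
    (2 * (N : ℝ≥0∞) + 1) ^ (1 / q - 1 / p) * lpNormOn p (S m N) x ≤ morreyNorm p q x := by
  rw [morreyNorm_eq_iSup_lpNormOn]
  exact le_iSup₂ (f := fun (m : ℤ) (N : ℕ) => (2 * (N : ℝ≥0∞) + 1) ^ (1 / q - 1 / p) *
    lpNormOn p (S m N) x) m N

theorem nnnorm_le_morreyNorm (hp : p ≠ 0) (x : ℤ → ℂ) (k : ℤ) :
    (‖x k‖₊ : ℝ≥0∞) ≤ morreyNorm p q x := by
  have hball : S k 0 = {k} := by simp [S]
  simpa [hball, lpNormOn_singleton hp] using le_morreyNorm (p := p) (q := q) x k 0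

theorem morreyNorm_add_le (hp : 1 ≤ p) (x y : ℤ → ℂ) :
    morreyNorm p q (x + y) ≤ morreyNorm p q x + morreyNorm p q y := by
  refine iSup₂_le fun m N => ?_
  calc (2 * (N : ℝ≥0∞) + 1) ^ (1 / q - 1 / p) * lpNormOn p (S m N) (x + y)
      ≤ (2 * (N : ℝ≥0∞) + 1) ^ (1 / q - 1 / p) *
          (lpNormOn p (S m N) x + lpNormOn p (S m N) y) := by
        gcongr
        exact lpNormOn_add_le hp _ x y
    _ = (2 * (N : ℝ≥0∞) + 1) ^ (1 / q - 1 / p) * lpNormOn p (S m N) x +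
          (2 * (N : ℝ≥0∞) + 1) ^ (1 / q - 1 / p) * lpNormOn p (S m N) y := mul_add _ _ _
    _ ≤ morreyNorm p q x + morreyNorm p q y :=
        add_le_add (le_morreyNorm x m N) (le_morreyNorm y m N)

theorem morreyNorm_smul (hp : 0 < p) (α : ℂ) (x : ℤ → ℂ) :
    morreyNorm p q (α • x) = ‖α‖₊ * morreyNorm p q x := by
  simp only [morreyNorm_eq_iSup_lpNormOn, lpNormOn_smul hp, mul_left_comm _ (‖α‖₊ : ℝ≥0∞),
    ENNReal.mul_iSup]

theorem morreyNorm_eq_zero_iff (hp : 0 < p) (x : ℤ → ℂ) : morreyNorm p q x = 0 ↔ x = 0 := by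
  constructor
  · intro h
    funext k
    simpa [h] using nnnorm_le_morreyNorm (q := q) hp.ne' x k
  · rintro rfl
    simp [morreyNorm_eq_iSup_lpNormOn, lpNormOn_zero hp]

end MorreyNorm

theorem stmt2 (p q : ℝ) (hp : 1 ≤ p) :
    (∀ x y : ℤ → ℂ, morreyNorm p q x < ⊤ → morreyNorm p q y < ⊤ →
      morreyNorm p q (x + y) ≤ morreyNorm p q x + morreyNorm p q y) ∧
    (∀ (α : ℂ) (x : ℤ → ℂ), morreyNorm p q (α • x) = (‖α‖₊ : ℝ≥0∞) * morreyNorm p q x) ∧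
    (∀ x : ℤ → ℂ, morreyNorm p q x = 0 ↔ x = 0) := by
  have hp0 : 0 < p := zero_lt_one.trans_le hp
  exact ⟨fun x y _ _ => morreyNorm_add_le hp x y, morreyNorm_smul hp0,
    morreyNorm_eq_zero_iff hp0⟩
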